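/- arXiv:1111.0861 — 3 statements merged into one kernel-verified Lean document; each statement's English description precedes it below -/
import Mathlib

section
/- Let a₁, …, aₙ be real symmetric 3×3 matrices. There exists a rotation r ∈ SO(3) with r ≠ 1, r² = 1 and r aₖ rᵀ = aₖ for all k (i.e., the n-tuple has at least isotropy class [ℤ₂]) if and only if there exists a nonzero vector ω ∈ ℝ³ such that for all k, l there is a real number λ_{k,l} with ω(aₖ, aₗ) = λ_{k,l} • ω, and for all k, (aₖ ω) × ω = 0. -/
open Matrix BigOperators

abbrev Mat3 := Matrix (Fin 3) (Fin 3) ℝ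

/-- `g ∈ SO(3)`: real orthogonal 3×3 matrix of determinant 1. -/
def IsSO3 (g : Mat3) : Prop := g * gᵀ = 1 ∧ g.det = 1

/-- The axial vector `ω(a,b)` of the commutator `ab - ba` of two symmetric matrices:
`ω(a,b) = ((ab−ba)₃₂, (ab−ba)₁₃, (ab−ba)₂₁)` (1-based indices). -/
noncomputable def commVec (a b : Mat3) : Fin 3 → ℝ :=
  ![(a * b - b * a) 2 1, (a * b - b * a) 0 2, (a * b - b * a) 1 0]

/-!
An involution `r ≠ 1` in `SO(3)` is the half-turn `2 ω ωᵀ / |ω|² - 1` about an axis `ω`, and a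
symmetric `a` commutes with it exactly when `ω` is an eigenvector of `a`, i.e. `(a ω) × ω = 0`.
For the forward direction it suffices that `r` fixes some `ω ≠ 0` and hence every `aₖ ω`: were
`aₖ ω × ω ≠ 0`, then `r` would also fix that cross product and so a basis. A common eigenvector
is killed by every commutator, and `ω(a, b) × v = (ab - ba) v`, so `ω(aₖ, aₗ)` is parallel to `ω`.
-/

lemma exists_smul_eq_of_cross_eq_zero {F : Type*} [Field F] {x y : Fin 3 → F} (hy : y ≠ 0)
    (h : x ⨯₃ y = 0) : ∃ c : F, c • y = x := by
  have hyx : y ⨯₃ x = 0 := by rw [← cross_anticomm, h, neg_zero]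
  by_contra! hne
  exact (crossProduct_ne_zero_iff_linearIndependent.2
    ((LinearIndependent.pair_iff' hy).2 hne)) hyx

lemma transpose_mulVec_cross_mulVec {R : Type*} [CommRing R] (M : Matrix (Fin 3) (Fin 3) R)
    (u v : Fin 3 → R) : Mᵀ *ᵥ ((M *ᵥ u) ⨯₃ (M *ᵥ v)) = M.det • (u ⨯₃ v) := by
  ext i
  fin_cases i <;>
  · simp only [mulVec, dotProduct, Fin.sum_univ_three, transpose_apply, cross_apply, det_fin_three,
      Pi.smul_apply, smul_eq_mul, Fin.isValue, Fin.zero_eta, Fin.mk_one, Fin.reduceFinMk,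
      Nat.succ_eq_add_one, Nat.reduceAdd, cons_val_zero, cons_val_one, cons_val]
    ring

lemma cross_eq_mulVec_of_transpose_eq_neg {S : Mat3} (hS : Sᵀ = -S) (ω : Fin 3 → ℝ) :
    ![S 2 1, S 0 2, S 1 0] ⨯₃ ω = S *ᵥ ω := by
  have h : ∀ i j, S i j = -S j i := fun i j => by
    rw [← neg_apply, ← hS, transpose_apply]
  have hd : ∀ i, S i i = 0 := fun i => by have := h i i; linarith
  ext i
  fin_cases i <;>
  · simp only [mulVec, dotProduct, Fin.sum_univ_three, cross_apply, hd, Fin.isValue, Fin.zero_eta,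
      Fin.mk_one, Fin.reduceFinMk, Nat.succ_eq_add_one, Nat.reduceAdd, cons_val_zero, cons_val_one,
      cons_val]
    simp only [h 0 1, h 1 2, h 0 2]
    ring

lemma commVec_cross {a b : Mat3} (ha : aᵀ = a) (hb : bᵀ = b) (ω : Fin 3 → ℝ) :
    commVec a b ⨯₃ ω = (a * b - b * a) *ᵥ ω := by
  refine cross_eq_mulVec_of_transpose_eq_neg ?_ ω
  rw [transpose_sub, transpose_mul, transpose_mul, ha, hb, neg_sub]

lemma mul_mul_transpose_eq_self_iff_commute {R : Type*} [CommRing R] {m : Type*} [Fintype m]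
    [DecidableEq m] {r : Matrix m m R} (hr : r * rᵀ = 1) (a : Matrix m m R) :
    r * a * rᵀ = a ↔ Commute r a := by
  have hr' : rᵀ * r = 1 := mul_eq_one_comm.1 hr
  constructor
  · intro h
    calc r * a = r * a * (rᵀ * r) := by rw [hr', Matrix.mul_one]
      _ = a * r := by rw [← Matrix.mul_assoc, h]
  · intro h
    rw [h.eq, Matrix.mul_assoc, hr, Matrix.mul_one]

lemma Matrix.eq_one_of_mulVec_row_eq_self {R : Type*} [CommRing R] {m : Type*} [Fintype m]
    [DecidableEq m] {r B : Matrix m m R} (hB : IsUnit B.det) (h : ∀ i, r *ᵥ B i = B i) :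
    r = 1 := by
  have hrB : r * Bᵀ = Bᵀ := by
    ext i j
    simpa [mul_apply, mulVec, dotProduct] using congrFun (h j) i
  exact ((isUnit_iff_isUnit_det _).2 (isUnit_det_transpose B hB)).mul_eq_right.1 hrB

lemma IsSO3.ne_neg_one {r : Mat3} (hr : IsSO3 r) : r ≠ -1 := by
  rintro rfl
  norm_num [IsSO3, det_neg] at hr

lemma IsSO3.mulVec_cross {r : Mat3} (hr : IsSO3 r) (u v : Fin 3 → ℝ) :
    r *ᵥ (u ⨯₃ v) = (r *ᵥ u) ⨯₃ (r *ᵥ v) := by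
  have h := transpose_mulVec_cross_mulVec r u v
  rw [hr.2, one_smul] at h
  rw [← h, mulVec_mulVec, hr.1, one_mulVec]

lemma IsSO3.eq_one_of_mulVec_eq_self {r : Mat3} (hr : IsSO3 r) {u v : Fin 3 → ℝ}
    (hu : r *ᵥ u = u) (hv : r *ᵥ v = v) (huv : u ⨯₃ v ≠ 0) : r = 1 := by
  refine Matrix.eq_one_of_mulVec_row_eq_self (B := ![u ⨯₃ v, u, v]) ?_ ?_
  · rw [← triple_product_eq_det, isUnit_iff_ne_zero]
    exact fun h => huv (dotProduct_self_eq_zero.1 h)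
  · intro i
    fin_cases i
    · simp [hr.mulVec_cross, hu, hv]
    · exact hu
    · exact hv

lemma Matrix.exists_mulVec_eq_self_of_mul_self_eq_one {R : Type*} [CommRing R] {m : Type*}
    [Fintype m] [DecidableEq m] {r : Matrix m m R} (hr : r * r = 1) (hne : r ≠ -1) :
    ∃ ω, ω ≠ 0 ∧ r *ᵥ ω = ω := by
  obtain ⟨v, hv⟩ : ∃ v, (r + 1) *ᵥ v ≠ 0 := by
    by_contra! h
    exact hne (eq_neg_of_add_eq_zero_left (ext_of_mulVec_single fun j => by rw [h, zero_mulVec]))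
  refine ⟨(r + 1) *ᵥ v, hv, ?_⟩
  rw [mulVec_mulVec, Matrix.mul_add, hr, Matrix.mul_one, add_comm]

lemma exists_commVec_eq_smul {a b : Mat3} (ha : aᵀ = a) (hb : bᵀ = b) {ω : Fin 3 → ℝ}
    (hω : ω ≠ 0) {μ ν : ℝ} (hμ : μ • ω = a *ᵥ ω) (hν : ν • ω = b *ᵥ ω) :
    ∃ c : ℝ, commVec a b = c • ω := by
  obtain ⟨c, hc⟩ := exists_smul_eq_of_cross_eq_zero hω (x := commVec a b) <| by
    rw [commVec_cross ha hb, sub_mulVec, ← mulVec_mulVec, ← mulVec_mulVec, ← hμ, ← hν,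
      mulVec_smul, mulVec_smul, ← hμ, ← hν, smul_smul, smul_smul, mul_comm, sub_self]
  exact ⟨c, hc.symm⟩

lemma det_one_add_vecMulVec {R : Type*} [CommRing R] {m : Type*} [Fintype m] [DecidableEq m]
    (u v : m → R) : (1 + vecMulVec u v).det = 1 + v ⬝ᵥ u := by
  rw [vecMulVec_eq Unit, det_one_add_replicateCol_mul_replicateRow]

noncomputable def halfTurn (ω : Fin 3 → ℝ) : Mat3 := (2 / (ω ⬝ᵥ ω)) • vecMulVec ω ω - 1

section halfTurn

variable {ω : Fin 3 → ℝ}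

lemma halfTurn_transpose (ω : Fin 3 → ℝ) : (halfTurn ω)ᵀ = halfTurn ω := by
  simp [halfTurn, transpose_vecMulVec]

lemma halfTurn_mul_self (hω : ω ≠ 0) : halfTurn ω * halfTurn ω = 1 := by
  have hs : ω ⬝ᵥ ω ≠ 0 := mt dotProduct_self_eq_zero.1 hω
  have hc : 2 / (ω ⬝ᵥ ω) * (2 / (ω ⬝ᵥ ω) * (ω ⬝ᵥ ω)) = 2 * (2 / (ω ⬝ᵥ ω)) := by field_simp
  simp only [halfTurn, sub_mul, mul_sub, Matrix.smul_mul, Matrix.mul_smul,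
    vecMulVec_mul_vecMulVec, vecMulVec_smul, smul_smul, hc, Matrix.one_mul, Matrix.mul_one]
  rw [two_mul, add_smul]
  abel

lemma det_halfTurn (hω : ω ≠ 0) : (halfTurn ω).det = 1 := by
  have hs : ω ⬝ᵥ ω ≠ 0 := mt dotProduct_self_eq_zero.1 hω
  have h : halfTurn ω = -(1 + vecMulVec (-(2 / (ω ⬝ᵥ ω)) • ω) ω) := by
    rw [halfTurn, smul_vecMulVec, neg_smul]
    abel
  rw [h, det_neg, det_one_add_vecMulVec, dotProduct_smul, smul_eq_mul]
  field_simp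
  norm_num

lemma isSO3_halfTurn (hω : ω ≠ 0) : IsSO3 (halfTurn ω) :=
  ⟨by rw [halfTurn_transpose, halfTurn_mul_self hω], det_halfTurn hω⟩

lemma halfTurn_ne_one (hω : ω ≠ 0) : halfTurn ω ≠ 1 := by
  have hs : ω ⬝ᵥ ω ≠ 0 := mt dotProduct_self_eq_zero.1 hω
  intro h
  have htr := congrArg trace h
  rw [halfTurn, trace_sub, trace_smul, trace_vecMulVec, trace_one, smul_eq_mul,
    div_mul_cancel₀ _ hs] at htr
  norm_num at htr

lemma commute_halfTurn {a : Mat3} (ha : aᵀ = a) {μ : ℝ} (hμ : μ • ω = a *ᵥ ω) :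
    Commute a (halfTurn ω) := by
  have hP : a * vecMulVec ω ω = vecMulVec ω ω * a := by
    rw [mul_vecMulVec, vecMulVec_mul, ← mulVec_transpose, ha, ← hμ, smul_vecMulVec,
      vecMulVec_smul]
  exact ((Commute.smul_right hP _).sub_right (Commute.one_right a))

end halfTurn

/-- an `n`-tuple of real symmetric 3×3 matrices has at least isotropy `[ℤ₂]`
(a common order-2 rotational symmetry) iff there is a nonzero vector `ω` which is
proportional to all commutator vectors `ω(aₖ,aₗ)` and satisfies `(aₖ ω) × ω = 0` for all `k`. -/
theorem isotropy_Z2_iff {n : ℕ} (a : Fin n → Mat3) (hsym : ∀ k, (a k)ᵀ = a k) :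
    (∃ r : Mat3, IsSO3 r ∧ r ≠ 1 ∧ r * r = 1 ∧ ∀ k, r * a k * rᵀ = a k) ↔
    (∃ ω : Fin 3 → ℝ, ω ≠ 0 ∧
      (∀ k l, ∃ lam : ℝ, commVec (a k) (a l) = lam • ω) ∧
      (∀ k, crossProduct ((a k).mulVec ω) ω = 0)) := by
  constructor
  · rintro ⟨r, hr, hne, hr2, hfix⟩
    obtain ⟨ω, hω, hrω⟩ := exists_mulVec_eq_self_of_mul_self_eq_one hr2 hr.ne_neg_one
    have hcross : ∀ k, (a k *ᵥ ω) ⨯₃ ω = 0 := fun k => by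
      by_contra h
      have hcomm := (mul_mul_transpose_eq_self_iff_commute hr.1 (a k)).1 (hfix k)
      refine hne (hr.eq_one_of_mulVec_eq_self ?_ hrω h)
      rw [mulVec_mulVec, hcomm.eq, ← mulVec_mulVec, hrω]
    refine ⟨ω, hω, fun k l => ?_, hcross⟩
    obtain ⟨μ, hμ⟩ := exists_smul_eq_of_cross_eq_zero hω (hcross k)
    obtain ⟨ν, hν⟩ := exists_smul_eq_of_cross_eq_zero hω (hcross l)
    exact exists_commVec_eq_smul (hsym k) (hsym l) hω hμ hν
  · rintro ⟨ω, hω, -, hcross⟩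
    have hr := isSO3_halfTurn hω
    refine ⟨halfTurn ω, hr, halfTurn_ne_one hω, halfTurn_mul_self hω, fun k => ?_⟩
    obtain ⟨μ, hμ⟩ := exists_smul_eq_of_cross_eq_zero hω (hcross k)
    exact (mul_mul_transpose_eq_self_iff_commute hr.1 (a k)).2
      (commute_halfTurn (hsym k) hμ).symm
end

section
/- Let a₁, …, aₙ be real symmetric 3×3 matrices. There exist g ∈ SO(3) and real numbers pₖ, qₖ such that g aₖ gᵀ = diag(pₖ, pₖ, qₖ) for every k (i.e., the n-tuple has at least isotropy class [O(2)]) if and only if for every k the deviatoric part dev(aₖ) has a repeated eigenvalue — equivalently (tr((dev aₖ)²))³ = 54 (det(dev aₖ))² — and for all k, l the Cauchy–Schwarz equality (tr(dev aₖ · dev aₗ))² = tr((dev aₖ)²) · tr((dev aₗ)²) holds. -/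
/-!
Both sides say that all the `aₖ` have the form `sₖ • 1 + tₖ • u uᵀ` for one unit vector `u`.
Such matrices are exactly those that a rotation sending `u` to `±e₃` makes diagonal of the form
`diag(p, p, q)`.

For a symmetric traceless `m` the discriminant condition `T³ = 54 det²`, with `T = tr(m²) ≥ 0`,
gives `T = 6r²` and `det m = -2r³`. Cayley–Hamilton then reads `(m - r)²(m + 2r) = 0`.
For a symmetric matrix the square can be dropped, so when `r ≠ 0` the matrix `(r - m)/(3r)` is a
symmetric idempotent of trace `1`, i.e. `u uᵀ`. Equality in the Cauchy–Schwarz inequality for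
`(A, B) ↦ tr(AB)` makes every deviator a multiple of one nonzero deviator. All deviators then
share its axis `u`.
-/

open Matrix BigOperators

/-- The deviatoric (traceless) part of a 3×3 matrix. -/
noncomputable def dev (m : Mat3) : Mat3 := m - (m.trace / 3) • 1

namespace Matrix

variable {n : Type*}

theorem isSymm_vecMulVec (u : n → ℝ) : (vecMulVec u u).IsSymm := transpose_vecMulVec u u

variable [Fintype n] {A B P g : Matrix n n ℝ}

theorem IsSymm.trace_mul_self_nonneg (hA : A.IsSymm) : 0 ≤ (A * A).trace := by
  simpa [conjTranspose_eq_transpose_of_trivial, hA.eq] using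
    (posSemidef_conjTranspose_mul_self A).trace_nonneg

theorem IsSymm.eq_zero_of_trace_mul_self_eq_zero (hA : A.IsSymm) (h : (A * A).trace = 0) :
    A = 0 := by
  rw [← trace_conjTranspose_mul_self_eq_zero_iff, conjTranspose_eq_transpose_of_trivial, hA.eq, h]

theorem IsSymm.eq_smul_of_trace_mul_sq_eq (hA : A.IsSymm) (hB : B.IsSymm) (hA0 : A ≠ 0)
    (h : (A * B).trace ^ 2 = (A * A).trace * (B * B).trace) : ∃ c : ℝ, B = c • A := by
  have hpos : 0 < (A * A).trace := hA.trace_mul_self_nonneg.lt_of_ne fun h0 =>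
    hA0 (hA.eq_zero_of_trace_mul_self_eq_zero h0.symm)
  set c := (A * B).trace / (A * A).trace with hc
  refine ⟨c, sub_eq_zero.mp ((hB.sub (hA.smul c)).eq_zero_of_trace_mul_self_eq_zero ?_)⟩
  simp only [sub_mul, mul_sub, Matrix.smul_mul, Matrix.mul_smul, trace_sub, trace_smul,
    trace_mul_comm B A, smul_eq_mul]
  rw [hc]
  field_simp
  linear_combination -h

theorem IsSymm.mul_eq_zero_of_mul_mul_eq_zero (hA : A.IsSymm) (hB : B.IsSymm)
    (hAB : Commute A B) (h : A * A * B = 0) : A * B = 0 := by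
  refine IsSymm.eq_zero_of_trace_mul_self_eq_zero ?_ ?_
  · rw [IsSymm, transpose_mul, hA.eq, hB.eq, hAB.eq]
  · rw [mul_assoc, ← mul_assoc B, ← hAB.eq, ← mul_assoc, ← mul_assoc, h, zero_mul, trace_zero]

theorem IsSymm.exists_mulVec_eq_self (hP : P.IsSymm) (hPP : IsIdempotentElem P) (h0 : P ≠ 0) :
    ∃ u : n → ℝ, u ⬝ᵥ u = 1 ∧ P *ᵥ u = u := by
  obtain ⟨j, hj⟩ : ∃ j, P j ≠ 0 := by
    by_contra! h
    exact h0 (funext h)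
  have hfix : P *ᵥ P j = P j := by
    funext i
    simpa [mulVec, dotProduct, mul_apply, hP.apply _ j] using congrFun (congrFun hPP i) j
  have hpos : 0 < P j ⬝ᵥ P j := by simpa using dotProduct_self_star_pos_iff.mpr hj
  refine ⟨(√(P j ⬝ᵥ P j))⁻¹ • P j, ?_, by rw [mulVec_smul, hfix]⟩
  rw [dotProduct_smul, smul_dotProduct, smul_eq_mul, smul_eq_mul, ← mul_assoc, ← mul_inv,
    Real.mul_self_sqrt hpos.le, inv_mul_cancel₀ hpos.ne']

theorem IsSymm.eq_vecMulVec_of_isIdempotentElem (hP : P.IsSymm) (hPP : IsIdempotentElem P)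
    (htr : P.trace = 1) : ∃ u : n → ℝ, u ⬝ᵥ u = 1 ∧ P = vecMulVec u u := by
  obtain ⟨u, hu, hPu⟩ := hP.exists_mulVec_eq_self hPP (by rintro rfl; simp at htr)
  have hPU : P * vecMulVec u u = vecMulVec u u := by rw [mul_vecMulVec, hPu]
  have hUP : vecMulVec u u * P = vecMulVec u u := by
    rw [vecMulVec_mul, ← mulVec_transpose, hP.eq, hPu]
  have hUU : vecMulVec u u * vecMulVec u u = vecMulVec u u := by
    rw [vecMulVec_mul_vecMulVec, hu, one_smul]
  refine ⟨u, hu, sub_eq_zero.mp ?_⟩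
  refine (hP.sub (isSymm_vecMulVec u)).eq_zero_of_trace_mul_self_eq_zero ?_
  rw [sub_mul, mul_sub, mul_sub, hPP.eq, hPU, hUP, hUU, sub_self, sub_zero, trace_sub, htr,
    trace_vecMulVec, hu, sub_self]

variable [DecidableEq n]

theorem mulVec_dotProduct_mulVec (hg : gᵀ * g = 1) (x y : n → ℝ) :
    (g *ᵥ x) ⬝ᵥ (g *ᵥ y) = x ⬝ᵥ y := by
  rw [dotProduct_mulVec, ← mulVec_transpose, mulVec_mulVec, hg, one_mulVec]

theorem isIdempotentElem_inv_smul_smul_one_sub {m : Matrix n n ℝ} {r : ℝ} (hr : r ≠ 0)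
    (h : (m - r • 1) * (m + (2 * r) • 1) = 0) : IsIdempotentElem ((3 * r)⁻¹ • (r • 1 - m)) := by
  have hsq : (r • 1 - m) * (r • 1 - m) = (3 * r) • (r • 1 - m) := by
    rw [← zero_add ((3 * r) • _), ← h]
    simp only [sub_mul, mul_sub, mul_add, Matrix.smul_mul, Matrix.mul_smul, one_mul,
      mul_one, smul_smul]
    module
  rw [IsIdempotentElem, Matrix.smul_mul, Matrix.mul_smul, hsq, smul_smul, smul_smul,
    inv_mul_cancel_right₀ (by positivity)]

theorem det_one_sub_smul_vecMulVec (c : ℝ) (u : n → ℝ) :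
    (1 - c • vecMulVec u u).det = 1 - c * (u ⬝ᵥ u) := by
  rw [sub_eq_add_neg, ← neg_smul, ← smul_vecMulVec, vecMulVec_eq Unit,
    det_one_add_replicateCol_mul_replicateRow, dotProduct_smul, smul_eq_mul, neg_mul,
    sub_eq_add_neg]

theorem exists_mul_transpose_eq_one_det_eq_neg_one_mulVec_eq {u v : n → ℝ} (huv : u ≠ v)
    (h : u ⬝ᵥ u = v ⬝ᵥ v) : ∃ R : Matrix n n ℝ, R * Rᵀ = 1 ∧ R.det = -1 ∧ R *ᵥ u = v := by
  set w := u - v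
  have hw : w ⬝ᵥ w ≠ 0 := by rwa [Ne, dotProduct_self_eq_zero, sub_eq_zero]
  set c := 2 / (w ⬝ᵥ w)
  have hcw : c * (w ⬝ᵥ w) = 2 := div_mul_cancel₀ 2 hw
  have hcu : c * (w ⬝ᵥ u) = 1 := by
    have : w ⬝ᵥ w = 2 * (w ⬝ᵥ u) := by
      simp only [w, sub_dotProduct, dotProduct_sub, dotProduct_comm v u, h]
      ring
    rw [this] at hcw
    linear_combination hcw / 2
  -- the Householder reflection in the hyperplane orthogonal to `u - v`
  refine ⟨1 - c • vecMulVec w w, ?_, ?_, ?_⟩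
  · have hcc : c * (c * (w ⬝ᵥ w)) = 2 * c := by rw [hcw, mul_comm]
    simp only [transpose_sub, transpose_one, transpose_smul, transpose_vecMulVec, sub_mul,
      mul_sub, Matrix.smul_mul, Matrix.mul_smul, vecMulVec_mul_vecMulVec, vecMulVec_smul,
      smul_smul, one_mul, mul_one, hcc]
    module
  · rw [det_one_sub_smul_vecMulVec, hcw]
    norm_num
  · rw [sub_mulVec, one_mulVec, smul_mulVec, vecMulVec_mulVec, op_smul_eq_smul, smul_smul, hcu,
      one_smul, sub_sub_cancel]

theorem mul_smul_one_add_smul_vecMulVec_mul_transpose (hg : g * gᵀ = 1) (s t : ℝ) (u : n → ℝ) :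
    g * (s • 1 + t • vecMulVec u u) * gᵀ = s • 1 + t • vecMulVec (g *ᵥ u) (g *ᵥ u) := by
  rw [mul_add, add_mul, Matrix.mul_smul, Matrix.mul_smul, Matrix.smul_mul, Matrix.smul_mul,
    mul_one, hg, mul_vecMulVec, vecMulVec_mul, vecMul_transpose]

end Matrix

/-- `a` commutes with every rotation about the axis `u`. -/
def IsUniaxial {n : Type*} [DecidableEq n] (u : n → ℝ) (a : Matrix n n ℝ) : Prop :=
  ∃ s t : ℝ, a = s • 1 + t • vecMulVec u u

theorem exists_eq_six_mul_sq_and_eq_neg_two_mul_cube {T D : ℝ} (hT : 0 ≤ T)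
    (h : T ^ 3 = 54 * D ^ 2) : ∃ r : ℝ, T = 6 * r ^ 2 ∧ D = -2 * r ^ 3 := by
  set s := √(T / 6)
  have hs : s ^ 2 = T / 6 := Real.sq_sqrt (by positivity)
  have hs3 : (s ^ 3) ^ 2 = (D / 2) ^ 2 := by
    have : (s ^ 2) ^ 3 = (D / 2) ^ 2 := by
      rw [hs]
      linear_combination h / 216
    linear_combination this
  rcases sq_eq_sq_iff_eq_or_eq_neg.mp hs3 with h3 | h3
  · exact ⟨-s, by linear_combination -6 * hs, by linear_combination -2 * h3⟩
  · exact ⟨s, by linear_combination -6 * hs, by linear_combination 2 * h3⟩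

theorem cayley_hamilton_fin_three (m : Mat3) :
    m * m * m = m.trace • (m * m) - ((m.trace ^ 2 - (m * m).trace) / 2) • m + m.det • 1 := by
  ext i j
  fin_cases i <;> fin_cases j <;>
    simp [mul_apply, Fin.sum_univ_three, trace, det_fin_three, one_apply] <;> ring

theorem Matrix.IsSymm.mul_sub_smul_one_mul_add_smul_one_eq_zero {m : Mat3} (hm : m.IsSymm)
    (htr : m.trace = 0) {r : ℝ} (hT : (m * m).trace = 6 * r ^ 2) (hdet : m.det = -2 * r ^ 3) :
    (m - r • 1) * (m + (2 * r) • 1) = 0 := by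
  refine (hm.sub (isSymm_one.smul r)).mul_eq_zero_of_mul_mul_eq_zero
    (hm.add (isSymm_one.smul _)) ?_ ?_
  · show _ * _ = _ * _
    simp only [sub_mul, mul_sub, add_mul, mul_add, Matrix.smul_mul, Matrix.mul_smul, one_mul,
      mul_one, smul_smul]
    module
  · have hCH := cayley_hamilton_fin_three m
    rw [htr, hT, hdet] at hCH
    simp only [sub_mul, mul_sub, mul_add, Matrix.smul_mul, Matrix.mul_smul, one_mul, mul_one,
      smul_smul, hCH]
    module

theorem Matrix.IsSymm.exists_eq_smul_one_sub_three_smul_vecMulVec {m : Mat3} (hm : m.IsSymm)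
    (htr : m.trace = 0) (hdisc : (m * m).trace ^ 3 = 54 * m.det ^ 2) :
    ∃ u : Fin 3 → ℝ, u ⬝ᵥ u = 1 ∧ ∃ r : ℝ, m = r • (1 - (3 : ℝ) • vecMulVec u u) := by
  obtain ⟨r, hT, hdet⟩ :=
    exists_eq_six_mul_sq_and_eq_neg_two_mul_cube hm.trace_mul_self_nonneg hdisc
  by_cases hr : r = 0
  · refine ⟨![0, 0, 1], by simp [dotProduct, Fin.sum_univ_three], 0, ?_⟩
    rw [zero_smul]
    exact hm.eq_zero_of_trace_mul_self_eq_zero (by rw [hT, hr]; ring)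
  have hP := isIdempotentElem_inv_smul_smul_one_sub hr
    (hm.mul_sub_smul_one_mul_add_smul_one_eq_zero htr hT hdet)
  have htrP : ((3 * r)⁻¹ • (r • 1 - m)).trace = 1 := by
    simp only [trace_smul, trace_sub, trace_one, htr, Fintype.card_fin, smul_eq_mul]
    field_simp
    ring
  obtain ⟨u, hu, hPu⟩ :=
    ((isSymm_one.smul r).sub hm |>.smul _).eq_vecMulVec_of_isIdempotentElem hP htrP
  refine ⟨u, hu, r, ?_⟩
  rw [← hPu, smul_smul, show 3 * (3 * r)⁻¹ = r⁻¹ by field_simp, smul_sub, smul_smul,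
    mul_inv_cancel₀ hr, one_smul, sub_sub_cancel]

theorem diagonal_eq_smul_one_add_smul_vecMulVec (p q : ℝ) :
    diagonal ![p, p, q] = p • (1 : Mat3) + (q - p) • vecMulVec ![0, 0, 1] ![0, 0, 1] := by
  ext i j
  fin_cases i <;> fin_cases j <;> simp [one_apply]

theorem exists_isSO3_vecMulVec_mulVec_eq {u : Fin 3 → ℝ} (hu : u ⬝ᵥ u = 1) :
    ∃ g : Mat3, IsSO3 g ∧ vecMulVec (g *ᵥ u) (g *ᵥ u) = vecMulVec ![0, 0, 1] ![0, 0, 1] := by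
  obtain ⟨v, hvu, hv⟩ :
      ∃ v : Fin 3 → ℝ, v ≠ u ∧ vecMulVec v v = vecMulVec ![0, 0, 1] ![0, 0, 1] := by
    by_cases h : u = ![0, 0, 1]
    · refine ⟨-![0, 0, 1], ?_, by rw [neg_vecMulVec, vecMulVec_neg, neg_neg]⟩
      rw [h, Ne, funext_iff]
      exact fun h2 => absurd (h2 2) (by simp; norm_num)
    · exact ⟨![0, 0, 1], Ne.symm h, rfl⟩
  have huv : u ⬝ᵥ u = v ⬝ᵥ v := by
    rw [hu, ← trace_vecMulVec, hv, trace_vecMulVec]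
    simp [dotProduct, Fin.sum_univ_three]
  obtain ⟨R, hR, hdet, hRu⟩ := exists_mul_transpose_eq_one_det_eq_neg_one_mulVec_eq hvu.symm huv
  -- in odd dimension `-R` is a rotation; it sends `u` to `-v`
  refine ⟨-R, ⟨by simpa using hR, by rw [det_neg, hdet]; norm_num⟩, ?_⟩
  rw [neg_mulVec, hRu, neg_vecMulVec, vecMulVec_neg, neg_neg, hv]

theorem exists_isSO3_conj_eq_diagonal_iff {ι : Type*} (a : ι → Mat3) :
    (∃ g : Mat3, IsSO3 g ∧ ∀ k, ∃ p q : ℝ, g * a k * gᵀ = diagonal ![p, p, q]) ↔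
      ∃ u : Fin 3 → ℝ, u ⬝ᵥ u = 1 ∧ ∀ k, IsUniaxial u (a k) := by
  constructor
  · rintro ⟨g, ⟨hg, -⟩, hdiag⟩
    have hg' : gᵀ * g = 1 := mul_eq_one_comm.mp hg
    refine ⟨gᵀ *ᵥ ![0, 0, 1], ?_, fun k => ?_⟩
    · rw [mulVec_dotProduct_mulVec (by rwa [transpose_transpose])]
      simp [dotProduct, Fin.sum_univ_three]
    obtain ⟨p, q, h⟩ := hdiag k
    refine ⟨p, q - p, ?_⟩
    calc a k = gᵀ * (g * a k * gᵀ) * gᵀᵀ := by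
          rw [transpose_transpose, ← mul_assoc, ← mul_assoc, hg', one_mul, mul_assoc, hg',
            mul_one]
      _ = _ := by
        rw [h, diagonal_eq_smul_one_add_smul_vecMulVec,
          mul_smul_one_add_smul_vecMulVec_mul_transpose (by rwa [transpose_transpose])]
  · rintro ⟨u, hu, hk⟩
    obtain ⟨g, hg, hgu⟩ := exists_isSO3_vecMulVec_mulVec_eq hu
    refine ⟨g, hg, fun k => ?_⟩
    obtain ⟨s, t, h⟩ := hk k
    refine ⟨s, s + t, ?_⟩
    rw [h, mul_smul_one_add_smul_vecMulVec_mul_transpose hg.1, hgu,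
      diagonal_eq_smul_one_add_smul_vecMulVec, add_sub_cancel_left]

theorem isSymm_dev {a : Mat3} (h : a.IsSymm) : (dev a).IsSymm := h.sub (isSymm_one.smul _)

theorem trace_dev (a : Mat3) : (dev a).trace = 0 := by
  simp only [dev, trace_sub, trace_smul, trace_one, Fintype.card_fin, smul_eq_mul]
  ring

theorem dev_smul_one_add_smul_vecMulVec {u : Fin 3 → ℝ} (hu : u ⬝ᵥ u = 1) (s t : ℝ) :
    dev (s • 1 + t • vecMulVec u u) = (-t / 3) • (1 - (3 : ℝ) • vecMulVec u u) := by
  simp only [dev, trace_add, trace_smul, trace_one, trace_vecMulVec, hu, Fintype.card_fin,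
    smul_eq_mul]
  module

theorem isUniaxial_iff_exists_dev_eq_smul {u : Fin 3 → ℝ} (hu : u ⬝ᵥ u = 1) {a : Mat3} :
    IsUniaxial u a ↔ ∃ d : ℝ, dev a = d • (1 - (3 : ℝ) • vecMulVec u u) := by
  constructor
  · rintro ⟨s, t, rfl⟩
    exact ⟨_, dev_smul_one_add_smul_vecMulVec hu s t⟩
  · rintro ⟨d, hd⟩
    refine ⟨a.trace / 3 + d, -3 * d, ?_⟩
    calc a = dev a + (a.trace / 3) • 1 := (sub_add_cancel _ _).symm
      _ = _ := by rw [hd]; module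

theorem trace_one_sub_three_smul_vecMulVec_mul_self {u : Fin 3 → ℝ} (hu : u ⬝ᵥ u = 1) :
    ((1 - (3 : ℝ) • vecMulVec u u) * (1 - (3 : ℝ) • vecMulVec u u)).trace = 6 := by
  simp only [sub_mul, mul_sub, one_mul, mul_one, Matrix.smul_mul, Matrix.mul_smul,
    vecMulVec_mul_vecMulVec, hu, one_smul, trace_sub, trace_smul, trace_one, trace_vecMulVec,
    Fintype.card_fin, smul_eq_mul]
  norm_num

theorem exists_isUniaxial_iff {ι : Type*} {a : ι → Mat3} (hsym : ∀ k, (a k).IsSymm) :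
    (∃ u : Fin 3 → ℝ, u ⬝ᵥ u = 1 ∧ ∀ k, IsUniaxial u (a k)) ↔
      (∀ k, (dev (a k) * dev (a k)).trace ^ 3 = 54 * (dev (a k)).det ^ 2) ∧
      ∀ k l, (dev (a k) * dev (a l)).trace ^ 2 =
        (dev (a k) * dev (a k)).trace * (dev (a l) * dev (a l)).trace := by
  constructor
  · rintro ⟨u, hu, h⟩
    choose d hd using fun k => (isUniaxial_iff_exists_dev_eq_smul hu).mp (h k)
    have htr : ∀ k l, (dev (a k) * dev (a l)).trace = 6 * (d k * d l) := by
      intro k l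
      rw [hd, hd, Matrix.smul_mul, Matrix.mul_smul, trace_smul, trace_smul,
        trace_one_sub_three_smul_vecMulVec_mul_self hu, smul_eq_mul, smul_eq_mul]
      ring
    have hdet : ∀ k, (dev (a k)).det = -2 * d k ^ 3 := by
      intro k
      rw [hd, det_smul, det_one_sub_smul_vecMulVec, hu, Fintype.card_fin]
      ring
    exact ⟨fun k => by rw [htr, hdet]; ring, fun k l => by rw [htr, htr, htr]; ring⟩
  · rintro ⟨hdisc, hcs⟩
    by_cases h0 : ∀ k, dev (a k) = 0
    · have he : (![0, 0, 1] : Fin 3 → ℝ) ⬝ᵥ ![0, 0, 1] = 1 := by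
        simp [dotProduct, Fin.sum_univ_three]
      exact ⟨_, he, fun k => (isUniaxial_iff_exists_dev_eq_smul he).mpr
        ⟨0, by rw [h0 k, zero_smul]⟩⟩
    obtain ⟨k₀, hk₀⟩ := not_forall.mp h0
    obtain ⟨u, hu, r, hr⟩ := (isSymm_dev (hsym k₀)).exists_eq_smul_one_sub_three_smul_vecMulVec
      (trace_dev _) (hdisc k₀)
    refine ⟨u, hu, fun k => (isUniaxial_iff_exists_dev_eq_smul hu).mpr ?_⟩
    obtain ⟨c, hc⟩ :=
      (isSymm_dev (hsym k₀)).eq_smul_of_trace_mul_sq_eq (isSymm_dev (hsym k)) hk₀ (hcs k₀ k)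
    exact ⟨c * r, by rw [hc, hr, smul_smul]⟩

/-- an `n`-tuple of real symmetric 3×3 matrices has at least isotropy `[O(2)]`
(a rotation brings every `aₖ` to the form `diag(pₖ,pₖ,qₖ)`) iff each deviator has a repeated
eigenvalue — equivalently `(tr((dev aₖ)²))³ = 54 (det(dev aₖ))²` — and every pair of deviators
satisfies the Cauchy–Schwarz equality. -/
theorem isotropy_O2_iff {n : ℕ} (a : Fin n → Mat3) (hsym : ∀ k, (a k)ᵀ = a k) :
    (∃ g : Mat3, IsSO3 g ∧ ∀ k, ∃ p q : ℝ,
        g * a k * gᵀ = Matrix.diagonal ![p, p, q]) ↔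
    ((∀ k, ((dev (a k) * dev (a k)).trace) ^ 3 = 54 * (dev (a k)).det ^ 2) ∧
     (∀ k l, ((dev (a k) * dev (a l)).trace) ^ 2 =
        (dev (a k) * dev (a k)).trace * (dev (a l) * dev (a l)).trace)) :=
  (exists_isSO3_conj_eq_diagonal_iff a).trans (exists_isUniaxial_iff hsym)
end

section
/- Let G be a compact topological group and ρ : G → GL(n, ℝ) a continuous linear representation (a continuous group homomorphism into the group of invertible n×n real matrices) on ℝⁿ. If v₁, v₂ ∈ ℝⁿ lie in different G-orbits (there is no g ∈ G with ρ(g) v₁ = v₂), then there exists a G-invariant polynomial P in n variables over ℝ — i.e., P(ρ(g) v) = P(v) for all g ∈ G and v ∈ ℝⁿ — such that P(v₁) ≠ P(v₂). In other words, the algebra of real invariant polynomials of a compact group representation separates the orbits. -/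
/-!
Orbits of a compact group are compact, so by Urysohn and Stone–Weierstrass two distinct orbits
are separated by a polynomial that is `≤ 0` on one and `≥ 1` on the other. Averaging it over a
right-invariant probability measure on `G` gives an invariant function with the same bounds, and
this average is again a polynomial: `p (ρ h v)` is a polynomial in `v` whose coefficients are
continuous in `h`, so one may integrate coefficientwise.
-/

open Matrix MvPolynomial MeasureTheory

section Approximation

variable {σ : Type*}

theorem exists_mvPolynomial_near_continuousMap (f : C(σ → ℝ, ℝ)) {K : Set (σ → ℝ)}
    (hK : IsCompact K) {ε : ℝ} (hε : 0 < ε) :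
    ∃ p : MvPolynomial σ ℝ, ∀ x ∈ K, |eval x p - f x| < ε := by
  let coord : σ → C(σ → ℝ, ℝ) := fun i => ⟨fun x => x i, continuous_apply i⟩
  have heval (p : MvPolynomial σ ℝ) (x : σ → ℝ) : aeval coord p x = eval x p := by
    rw [← ContinuousMap.evalAlgHom_apply ℝ ℝ x, ← AlgHom.comp_apply, comp_aeval,
      aeval_eq_eval]
    rfl
  have hsep : (aeval coord).range.SeparatesPoints := fun x y hxy => by
    obtain ⟨i, hi⟩ := Function.ne_iff.mp hxy
    exact ⟨_, ⟨coord i, ⟨(X i : MvPolynomial σ ℝ), aeval_X coord i⟩, rfl⟩, hi⟩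
  obtain ⟨_, ⟨p, rfl⟩, hp⟩ :=
    ContinuousMap.exists_mem_subalgebra_near_continuous_of_isCompact_of_separatesPoints
      hsep f hK hε
  exact ⟨p, fun x hx => by simpa [heval] using hp x hx⟩

theorem exists_mvPolynomial_nonpos_one_le_of_disjoint [Finite σ] {K₁ K₂ : Set (σ → ℝ)}
    (h₁ : IsCompact K₁) (h₂ : IsCompact K₂) (hd : Disjoint K₁ K₂) :
    ∃ p : MvPolynomial σ ℝ, (∀ x ∈ K₁, eval x p ≤ 0) ∧ ∀ x ∈ K₂, 1 ≤ eval x p := by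
  obtain ⟨f, hf₁, hf₂, -⟩ := exists_continuous_zero_one_of_isCompact h₁ h₂.isClosed hd
  obtain ⟨p, hp⟩ := exists_mvPolynomial_near_continuousMap f (h₁.union h₂)
    (by norm_num : (0 : ℝ) < 1 / 4)
  refine ⟨C 2 * p - C (1 / 2), fun x hx => ?_, fun x hx => ?_⟩
  · have := abs_lt.mp (hp x (.inl hx))
    rw [hf₁ hx] at this
    simp only [eval_sub, eval_mul, eval_C, Pi.zero_apply] at this ⊢
    linarith
  · have := abs_lt.mp (hp x (.inr hx))
    rw [hf₂ hx] at this
    simp only [eval_sub, eval_mul, eval_C, Pi.one_apply] at this ⊢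
    linarith

end Approximation

section Averaging

variable {σ Y : Type*} [TopologicalSpace Y]

theorem exists_eval_algebraMap_eq_eval_mulVec {ι : Type*} [Fintype ι] {M : Y → Matrix ι ι ℝ}
    (hM : Continuous M) (p : MvPolynomial ι ℝ) :
    ∃ P : MvPolynomial ι C(Y, ℝ),
      ∀ v x, eval (fun i => algebraMap ℝ C(Y, ℝ) (v i)) P x = eval (M x *ᵥ v) p := by
  let entry (i j : ι) : C(Y, ℝ) := ⟨fun x => M x i j, (continuous_apply_apply i j).comp hM⟩
  refine ⟨aeval (fun i => ∑ j, C (entry i j) * X j) p, fun v x => ?_⟩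
  have hcomp : ((ContinuousMap.evalAlgHom ℝ ℝ x).comp
      ((aeval fun i => algebraMap ℝ C(Y, ℝ) (v i)).restrictScalars ℝ)).comp
        (aeval fun i => ∑ j, C (entry i j) * X j) = aeval (M x *ᵥ v) := by
    refine algHom_ext fun i => ?_
    simp [entry, mulVec, dotProduct]
  simpa [aeval_eq_eval] using congrArg (· p) hcomp

variable [CompactSpace Y] [MeasurableSpace Y] [OpensMeasurableSpace Y] (μ : Measure Y)
  [IsFiniteMeasure μ]

theorem exists_eval_eq_integral_eval (P : MvPolynomial σ C(Y, ℝ)) :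
    ∃ Q : MvPolynomial σ ℝ,
      ∀ v, eval v Q = ∫ x, eval (fun i => algebraMap ℝ C(Y, ℝ) (v i)) P x ∂μ := by
  refine ⟨∑ m ∈ P.support, monomial m (∫ x, P.coeff m x ∂μ), fun v => ?_⟩
  conv_rhs => rw [P.as_sum]
  simp only [map_sum, eval_monomial, ContinuousMap.coe_sum, Finset.sum_apply]
  rw [integral_finsetSum]
  · refine Finset.sum_congr rfl fun m _ => ?_
    simp only [← map_pow]
    rw [← map_finsuppProd, ← Algebra.commutes, ← Algebra.smul_def]
    simp only [ContinuousMap.smul_apply, smul_eq_mul, integral_const_mul]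
    ring
  · exact fun m _ => (map_continuous _).integrable_of_hasCompactSupport (.of_compactSpace _)

theorem exists_eval_eq_integral_eval_mulVec {ι : Type*} [Fintype ι] {M : Y → Matrix ι ι ℝ}
    (hM : Continuous M) (p : MvPolynomial ι ℝ) :
    ∃ Q : MvPolynomial ι ℝ, ∀ v, eval v Q = ∫ x, eval (M x *ᵥ v) p ∂μ := by
  obtain ⟨P, hP⟩ := exists_eval_algebraMap_eq_eval_mulVec hM p
  obtain ⟨Q, hQ⟩ := exists_eval_eq_integral_eval μ P
  exact ⟨Q, fun v => by simp only [hQ, hP]⟩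

end Averaging

section Representation

variable {G ι : Type*} [Group G] [Fintype ι] [DecidableEq ι]
  (ρ : G →* GeneralLinearGroup ι ℝ)

theorem disjoint_range_mulVec {v w : ι → ℝ} (h : ¬ ∃ g, (ρ g : Matrix ι ι ℝ) *ᵥ v = w) :
    Disjoint (Set.range fun g => (ρ g : Matrix ι ι ℝ) *ᵥ v)
      (Set.range fun g => (ρ g : Matrix ι ι ℝ) *ᵥ w) := by
  refine Set.disjoint_left.mpr ?_
  rintro _ ⟨g, rfl⟩ ⟨g', hg' : (ρ g' : Matrix ι ι ℝ) *ᵥ w = (ρ g : Matrix ι ι ℝ) *ᵥ v⟩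
  refine h ⟨g'⁻¹ * g, ?_⟩
  rw [map_mul, Units.val_mul, ← mulVec_mulVec, ← hg', mulVec_mulVec, ← Units.val_mul,
    ← map_mul, inv_mul_cancel, map_one, Units.val_one, one_mulVec]

theorem isCompact_range_mulVec [TopologicalSpace G] [CompactSpace G]
    (hρ : Continuous fun g => (ρ g : Matrix ι ι ℝ)) (v : ι → ℝ) :
    IsCompact (Set.range fun g => (ρ g : Matrix ι ι ℝ) *ᵥ v) :=
  isCompact_range (hρ.matrix_mulVec continuous_const)

theorem eval_mulVec_eq_of_eval_eq_integral [MeasurableSpace G] [MeasurableMul G]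
    (μ : Measure G) [μ.IsMulRightInvariant] {p Q : MvPolynomial ι ℝ}
    (hQ : ∀ v, eval v Q = ∫ h, eval ((ρ h : Matrix ι ι ℝ) *ᵥ v) p ∂μ) (g : G) (v : ι → ℝ) :
    eval ((ρ g : Matrix ι ι ℝ) *ᵥ v) Q = eval v Q := by
  simp only [hQ, mulVec_mulVec, ← Units.val_mul, ← map_mul]
  exact integral_mul_right_eq_self (fun h => eval ((ρ h : Matrix ι ι ℝ) *ᵥ v) p) g

end Representation

theorem exists_isProbabilityMeasure_isMulRightInvariant (G : Type*) [Group G]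
    [TopologicalSpace G] [IsTopologicalGroup G] [CompactSpace G] [MeasurableSpace G]
    [BorelSpace G] :
    ∃ μ : Measure G, IsProbabilityMeasure μ ∧ μ.IsMulRightInvariant :=
  ⟨(Measure.haarMeasure ⊤).inv, ⟨by
    rw [Measure.inv_apply, Set.inv_univ, ← TopologicalSpace.PositiveCompacts.coe_top,
      Measure.haarMeasure_self]⟩, inferInstance⟩

/-- for a continuous linear representation `ρ : G → GL(n, ℝ)` of a compact
topological group `G` on `ℝⁿ`, the algebra of real `G`-invariant polynomials separates the
orbits: if `v₁` and `v₂` lie in different `G`-orbits, there is a `G`-invariant polynomial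
taking different values at `v₁` and `v₂`. -/
theorem invariant_polynomials_separate_orbits
    {n : ℕ} {G : Type*} [Group G] [TopologicalSpace G] [IsTopologicalGroup G]
    [CompactSpace G]
    (ρ : G →* Matrix.GeneralLinearGroup (Fin n) ℝ)
    (hρ : Continuous fun g => (ρ g : Matrix (Fin n) (Fin n) ℝ))
    (v₁ v₂ : Fin n → ℝ)
    (horb : ¬ ∃ g : G, ((ρ g : Matrix (Fin n) (Fin n) ℝ)).mulVec v₁ = v₂) :
    ∃ P : MvPolynomial (Fin n) ℝ,
      (∀ (g : G) (v : Fin n → ℝ),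
        MvPolynomial.eval (((ρ g : Matrix (Fin n) (Fin n) ℝ)).mulVec v) P =
          MvPolynomial.eval v P) ∧
      MvPolynomial.eval v₁ P ≠ MvPolynomial.eval v₂ P := by
  borelize G
  obtain ⟨μ, _, _⟩ := exists_isProbabilityMeasure_isMulRightInvariant G
  obtain ⟨p, hp₁, hp₂⟩ := exists_mvPolynomial_nonpos_one_le_of_disjoint
    (isCompact_range_mulVec ρ hρ v₁) (isCompact_range_mulVec ρ hρ v₂)
    (disjoint_range_mulVec ρ horb)
  obtain ⟨Q, hQ⟩ := exists_eval_eq_integral_eval_mulVec μ hρ p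
  refine ⟨Q, eval_mulVec_eq_of_eval_eq_integral ρ μ hQ, ne_of_lt ?_⟩
  have hQ₁ : eval v₁ Q ≤ 0 := by
    rw [hQ]
    exact integral_nonpos fun h => hp₁ _ ⟨h, rfl⟩
  have hQ₂ : 1 ≤ eval v₂ Q := by
    have hint : Integrable (fun h => eval ((ρ h : Matrix (Fin n) (Fin n) ℝ) *ᵥ v₂) p) μ :=
      Continuous.integrable_of_hasCompactSupport
        ((continuous_eval p).comp (hρ.matrix_mulVec continuous_const)) (.of_compactSpace _)
    calc (1 : ℝ) = ∫ _, 1 ∂μ := by simp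
      _ ≤ eval v₂ Q := (hQ v₂).symm ▸ integral_mono (integrable_const 1) hint
          fun h => hp₂ _ ⟨h, rfl⟩
  linarith
end
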